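/- Let X be a nonnegative random variable with cumulative distribution function F and finite second moment E[X²] = ∫₀^∞ 2x(1 − F(x)) dx. Then the weighted cumulative entropy of X satisfies 𝓒𝓔^w(X) = (1/2)E[X²] − (1/2) Σ_{n=1}^∞ μ^{(2)}_{1:n+1}/(n(n+1)); equivalently 𝓒𝓔^w(X) + (1/2) Σ_{n=1}^∞ μ^{(2)}_{1:n+1}/(n(n+1)) = (1/2)E[X²], where all terms are nonnegative. -/

import Mathlib

/-! With `q = 1 - F x`, the series `∑ q ^ (n + 2) / ((n + 1) (n + 2))` sums to
`q + (1 - q) log (1 - q)`, so `x · (-F log F) + x · ∑ₙ q ^ (n + 2) / ((n + 1) (n + 2)) = x (1 - F)`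
holds pointwise. Since everything is nonnegative, integrating over `(0, ∞)` in `[0, ∞]` and
exchanging sum and integral (Tonelli) gives the identity. -/

open MeasureTheory ProbabilityTheory Set
open scoped ENNReal

theorem hasSum_one_div_succ_mul_succ_add_one :
    HasSum (fun n : ℕ => 1 / (((n : ℝ) + 1) * ((n : ℝ) + 2))) 1 := by
  have hterm : ∀ n : ℕ, 1 / (((n : ℝ) + 1) * ((n : ℝ) + 2))
      = 1 / ((n : ℝ) + 1) - 1 / (((n + 1 : ℕ) : ℝ) + 1) := by
    intro n
    push_cast
    field_simp
    ring
  rw [hasSum_iff_tendsto_nat_of_nonneg (fun n => by positivity)]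
  simp_rw [hterm, Finset.sum_range_sub']
  simpa using (tendsto_const_nhds (x := (1 : ℝ))).sub tendsto_one_div_add_atTop_nhds_zero_nat

theorem hasSum_pow_add_two_div_of_abs_lt_one {q : ℝ} (hq : |q| < 1) :
    HasSum (fun n : ℕ => q ^ (n + 2) / (((n : ℝ) + 1) * ((n : ℝ) + 2)))
      (q + (1 - q) * Real.log (1 - q)) := by
  have hlog := Real.hasSum_pow_div_log_of_abs_lt_one hq
  have hshift : HasSum (fun n : ℕ => q ^ (n + 2) / ((n : ℝ) + 2)) (-Real.log (1 - q) - q) := by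
    have := (hasSum_nat_add_iff' 1).mpr hlog
    simpa [add_assoc, one_add_one_eq_two] using this
  -- `1 / ((n + 1)(n + 2)) = 1 / (n + 1) - 1 / (n + 2)` splits the series into two log series
  have hsplit : (fun n : ℕ => q ^ (n + 2) / (((n : ℝ) + 1) * ((n : ℝ) + 2)))
      = fun n : ℕ => q * (q ^ (n + 1) / ((n : ℝ) + 1)) - q ^ (n + 2) / ((n : ℝ) + 2) := by
    funext n
    field_simp
    ring
  rw [hsplit, show q + (1 - q) * Real.log (1 - q) = q * -Real.log (1 - q) - (-Real.log (1 - q) - q)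
    by ring]
  exact (hlog.mul_left q).sub hshift

theorem hasSum_pow_add_two_div {q : ℝ} (hq₀ : -1 < q) (hq₁ : q ≤ 1) :
    HasSum (fun n : ℕ => q ^ (n + 2) / (((n : ℝ) + 1) * ((n : ℝ) + 2)))
      (q + (1 - q) * Real.log (1 - q)) := by
  rcases hq₁.eq_or_lt with rfl | hq₁
  · simpa using hasSum_one_div_succ_mul_succ_add_one
  · exact hasSum_pow_add_two_div_of_abs_lt_one (abs_lt.mpr ⟨hq₀, hq₁⟩)

theorem ENNReal.ofReal_two_mul_div_two (y : ℝ) :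
    ENNReal.ofReal (2 * y) / 2 = ENNReal.ofReal y := by
  rw [ENNReal.ofReal_mul zero_le_two, ENNReal.ofReal_ofNat,
    mul_comm, ENNReal.mul_div_cancel_right two_ne_zero ENNReal.ofNat_ne_top]

theorem ENNReal.ofReal_div_succ_mul_succ_add_one (a : ℝ) (n : ℕ) :
    ENNReal.ofReal a / (((n : ℝ≥0∞) + 1) * ((n : ℝ≥0∞) + 2))
      = ENNReal.ofReal (a / (((n : ℝ) + 1) * ((n : ℝ) + 2))) := by
  rw [ENNReal.ofReal_div_of_pos (by positivity)]
  congr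
  norm_cast

theorem MeasureTheory.lintegral_div_const' {α : Type*} [MeasurableSpace α] (μ : Measure α)
    (f : α → ℝ≥0∞) {c : ℝ≥0∞} (hc : c ≠ 0) :
    ∫⁻ a, f a / c ∂μ = (∫⁻ a, f a ∂μ) / c := by
  simp_rw [div_eq_mul_inv]
  exact lintegral_mul_const' _ _ (ENNReal.inv_ne_top.mpr hc)

theorem ofReal_neg_mul_mul_log_add_tsum_div_two {x p : ℝ} (hx : 0 ≤ x) (hp₀ : 0 ≤ p)
    (hp₁ : p ≤ 1) :
    ENNReal.ofReal (-(x * p * Real.log p))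
      + (∑' n : ℕ, ENNReal.ofReal (2 * x * (1 - p) ^ (n + 2))
          / (((n : ℝ≥0∞) + 1) * ((n : ℝ≥0∞) + 2))) / 2
    = ENNReal.ofReal (2 * x * (1 - p)) / 2 := by
  have hq₀ : 0 ≤ 1 - p := sub_nonneg.mpr hp₁
  have hS : HasSum (fun n : ℕ => (1 - p) ^ (n + 2) / (((n : ℝ) + 1) * ((n : ℝ) + 2)))
      (1 - p + p * Real.log p) := by
    simpa using hasSum_pow_add_two_div (q := 1 - p) (by linarith) (by linarith)
  have hS₀ : 0 ≤ 1 - p + p * Real.log p := hS.nonneg fun n => by positivity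
  have htsum : ∑' n : ℕ, ENNReal.ofReal (2 * x * (1 - p) ^ (n + 2))
      / (((n : ℝ≥0∞) + 1) * ((n : ℝ≥0∞) + 2))
      = ENNReal.ofReal (2 * (x * (1 - p + p * Real.log p))) := by
    simp_rw [ENNReal.ofReal_div_succ_mul_succ_add_one, mul_div_assoc]
    rw [← ENNReal.ofReal_tsum_of_nonneg (fun n => by positivity) (hS.mul_left _).summable,
      (hS.mul_left _).tsum_eq, mul_assoc]
  have hent₀ : 0 ≤ -(x * p * Real.log p) :=
    neg_nonneg.mpr (mul_nonpos_of_nonneg_of_nonpos (mul_nonneg hx hp₀) (Real.log_nonpos hp₀ hp₁))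
  rw [htsum, mul_assoc 2 x, ENNReal.ofReal_two_mul_div_two, ENNReal.ofReal_two_mul_div_two,
    ← ENNReal.ofReal_add hent₀ (mul_nonneg hx hS₀)]
  congr 1
  ring

theorem wce_add_half_tsum_min_order_stats_eq_half_second_moment_general
    (μ : Measure ℝ) :
    (∫⁻ x in Set.Ioi (0 : ℝ),
        ENNReal.ofReal (-(x * cdf μ x * Real.log (cdf μ x))))
      + (∑' n : ℕ,
          (∫⁻ x in Set.Ioi (0 : ℝ), ENNReal.ofReal (2 * x * (1 - cdf μ x) ^ (n + 2)))
            / (((n : ℝ≥0∞) + 1) * ((n : ℝ≥0∞) + 2))) / 2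
    = (∫⁻ x in Set.Ioi (0 : ℝ), ENNReal.ofReal (2 * x * (1 - cdf μ x))) / 2 := by
  have hF : Measurable (cdf μ) := (cdf μ).mono.measurable
  have hc : ∀ n : ℕ, ((n : ℝ≥0∞) + 1) * ((n : ℝ≥0∞) + 2) ≠ 0 := fun n => by positivity
  simp_rw [← lintegral_div_const' _ _ (hc _)]
  rw [← lintegral_tsum (fun n => by fun_prop), ← lintegral_div_const' _ _ two_ne_zero,
    ← lintegral_div_const' _ _ two_ne_zero, ← lintegral_add_left (by fun_prop)]
  exact setLIntegral_congr_fun measurableSet_Ioi fun x hx =>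
    ofReal_neg_mul_mul_log_add_tsum_div_two (le_of_lt hx) (cdf_nonneg μ x) (cdf_le_one μ x)

/-- For a nonnegative random variable with cdf `F = cdf μ` and finite second
moment `E[X²] = ∫₀^∞ 2x (1 - F x) dx`, the weighted cumulative entropy
`𝓒𝓔^w(X) = ∫₀^∞ -x (F x) log (F x) dx` satisfies
`𝓒𝓔^w(X) + (1/2) ∑_{n=1}^∞ μ^{(2)}_{1:n+1} / (n (n+1)) = (1/2) E[X²]`, all terms being
nonnegative (values in `[0, ∞]`), where `μ^{(2)}_{1:m} = ∫₀^∞ 2x (1 - F x)^m dx` is the second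
moment of the smallest order statistic. -/
theorem wce_add_half_tsum_min_order_stats_eq_half_second_moment
    (μ : Measure ℝ) [IsProbabilityMeasure μ] (hnonneg : μ (Set.Iio 0) = 0)
    (hmom2 : ∫⁻ x in Set.Ioi (0 : ℝ), ENNReal.ofReal (2 * x * (1 - cdf μ x)) ≠ ⊤) :
    (∫⁻ x in Set.Ioi (0 : ℝ),
        ENNReal.ofReal (-(x * cdf μ x * Real.log (cdf μ x))))
      + (∑' n : ℕ,
          (∫⁻ x in Set.Ioi (0 : ℝ), ENNReal.ofReal (2 * x * (1 - cdf μ x) ^ (n + 2)))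
            / (((n : ℝ≥0∞) + 1) * ((n : ℝ≥0∞) + 2))) / 2
    = (∫⁻ x in Set.Ioi (0 : ℝ), ENNReal.ofReal (2 * x * (1 - cdf μ x))) / 2 :=
  wce_add_half_tsum_min_order_stats_eq_half_second_moment_general μ
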